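/- The Schwarzian derivative measures the failure of the Gel'fand–Fuks cocycle to be invariant under diffeomorphisms: let φ : ℝ → ℝ be smooth with φ'(τ) > 0 for all τ and φ(τ + 2π) = φ(τ) + 2π, and let ξ, η : ℝ → ℝ be smooth 2π-periodic. Write (Ad_{φ⁻¹}ξ)(τ) = ξ(φ(τ))/φ'(τ). Then ∫₀^{2π} (Ad_{φ⁻¹}ξ)'(τ) · (Ad_{φ⁻¹}η)''(τ) dτ − ∫₀^{2π} ξ'(τ)η''(τ) dτ = ∫₀^{2π} ( ξ(φ(τ))η'(φ(τ)) − ξ'(φ(τ))η(φ(τ)) ) · S(φ)(τ)/φ'(τ) dτ, where S(φ) is the Schwarzian derivative of φ. -/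

import Mathlib

open scoped Real ContDiff

/-- The Schwarzian derivative `S(F)(τ) = F'''(τ)/F'(τ) − (3/2)(F''(τ)/F'(τ))²`. -/
noncomputable def schwarzian (F : ℝ → ℝ) (τ : ℝ) : ℝ :=
  iteratedDeriv 3 F τ / deriv F τ - (3 / 2) * (iteratedDeriv 2 F τ / deriv F τ) ^ 2

/-- The pullback action of a circle diffeomorphism `φ` on a vector field `ξ`:
`(Ad_{φ⁻¹}ξ)(τ) = ξ(φ(τ))/φ'(τ)`. -/
noncomputable def adAction (φ ξ : ℝ → ℝ) : ℝ → ℝ :=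
  fun τ => ξ (φ τ) / deriv φ τ

lemma periodic_deriv_aux {f : ℝ → ℝ} {c : ℝ} (hf : Function.Periodic f c) :
    Function.Periodic (deriv f) c := by
  intro x
  have h : (fun y => f (y + c)) = f := funext hf
  rw [← deriv_comp_add_const, h]

lemma schwarzian_eq (φ : ℝ → ℝ) (τ : ℝ) :
    schwarzian φ τ =
      deriv (deriv (deriv φ)) τ / deriv φ τ
        - 3 / 2 * (deriv (deriv φ) τ / deriv φ τ) ^ 2 := by
  have h3 : iteratedDeriv 3 φ = deriv (deriv (deriv φ)) := by
    rw [show (3 : ℕ) = 2 + 1 from rfl, iteratedDeriv_succ,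
      show (2 : ℕ) = 1 + 1 from rfl, iteratedDeriv_succ, iteratedDeriv_one]
  have h2 : iteratedDeriv 2 φ = deriv (deriv φ) := by
    rw [show (2 : ℕ) = 1 + 1 from rfl, iteratedDeriv_succ, iteratedDeriv_one]
  rw [schwarzian, h3, h2]

lemma adAction_hasDerivAt {φ : ℝ → ℝ} (hφ : ContDiff ℝ (⊤ : ℕ∞) φ) (hφ' : ∀ τ, 0 < deriv φ τ)
    {ζ : ℝ → ℝ} (hζ : ContDiff ℝ (⊤ : ℕ∞) ζ) (τ : ℝ) :
    HasDerivAt (adAction φ ζ)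
      (deriv ζ (φ τ) - ζ (φ τ) * deriv (deriv φ) τ / (deriv φ τ) ^ 2) τ := by
  have hφ1 : ContDiff ℝ ∞ (deriv φ) := (contDiff_infty_iff_deriv.mp (hφ.of_le (by simp))).2
  have h1 : HasDerivAt φ (deriv φ τ) τ := (hφ.differentiable (by simp) τ).hasDerivAt
  have h2 : HasDerivAt ζ (deriv ζ (φ τ)) (φ τ) := (hζ.differentiable (by simp) _).hasDerivAt
  have h3 : HasDerivAt (fun t => ζ (φ t)) (deriv ζ (φ τ) * deriv φ τ) τ := h2.comp τ h1
  have h4 : HasDerivAt (deriv φ) (deriv (deriv φ) τ) τ :=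
    (hφ1.differentiable (by norm_num) τ).hasDerivAt
  have h5 := h3.div h4 (hφ' τ).ne'
  refine h5.congr_deriv ?_
  have hp := (hφ' τ).ne'
  field_simp

lemma adAction_deriv_eq {φ : ℝ → ℝ} (hφ : ContDiff ℝ (⊤ : ℕ∞) φ) (hφ' : ∀ τ, 0 < deriv φ τ)
    {ζ : ℝ → ℝ} (hζ : ContDiff ℝ (⊤ : ℕ∞) ζ) :
    deriv (adAction φ ζ) =
      fun τ => deriv ζ (φ τ) - ζ (φ τ) * deriv (deriv φ) τ / (deriv φ τ) ^ 2 :=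
  funext fun τ => (adAction_hasDerivAt hφ hφ' hζ τ).deriv

lemma adAction_hasDerivAt2 {φ : ℝ → ℝ} (hφ : ContDiff ℝ (⊤ : ℕ∞) φ) (hφ' : ∀ τ, 0 < deriv φ τ)
    {ζ : ℝ → ℝ} (hζ : ContDiff ℝ (⊤ : ℕ∞) ζ) (τ : ℝ) :
    HasDerivAt (deriv (adAction φ ζ))
      (deriv (deriv ζ) (φ τ) * deriv φ τ
        - deriv ζ (φ τ) * deriv (deriv φ) τ / deriv φ τ
        - ζ (φ τ) * (deriv (deriv (deriv φ)) τ / (deriv φ τ) ^ 2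
            - 2 * (deriv (deriv φ) τ) ^ 2 / (deriv φ τ) ^ 3)) τ := by
  rw [adAction_deriv_eq hφ hφ' hζ]
  have hφ1 : ContDiff ℝ ∞ (deriv φ) := (contDiff_infty_iff_deriv.mp (hφ.of_le (by simp))).2
  have hφ2 : ContDiff ℝ ∞ (deriv (deriv φ)) := (contDiff_infty_iff_deriv.mp hφ1).2
  have hζ1 : ContDiff ℝ ∞ (deriv ζ) := (contDiff_infty_iff_deriv.mp (hζ.of_le (by simp))).2
  have h1 : HasDerivAt φ (deriv φ τ) τ := (hφ.differentiable (by simp) τ).hasDerivAt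
  have hq : HasDerivAt (deriv φ) (deriv (deriv φ) τ) τ :=
    (hφ1.differentiable (by norm_num) τ).hasDerivAt
  have hr : HasDerivAt (deriv (deriv φ)) (deriv (deriv (deriv φ)) τ) τ :=
    (hφ2.differentiable (by norm_num) τ).hasDerivAt
  have hb1 : HasDerivAt (fun t => deriv ζ (φ t)) (deriv (deriv ζ) (φ τ) * deriv φ τ) τ :=
    ((hζ1.differentiable (by norm_num) _).hasDerivAt).comp τ h1
  have hb : HasDerivAt (fun t => ζ (φ t)) (deriv ζ (φ τ) * deriv φ τ) τ :=
    ((hζ.differentiable (by simp) _).hasDerivAt).comp τ h1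
  have hp2 : HasDerivAt (fun t => (deriv φ t) ^ 2) (2 * deriv φ τ ^ 1 * deriv (deriv φ) τ) τ := by
    simpa using hq.fun_pow 2
  have hnum : HasDerivAt (fun t => ζ (φ t) * deriv (deriv φ) t)
      (deriv ζ (φ τ) * deriv φ τ * deriv (deriv φ) τ + ζ (φ τ) * deriv (deriv (deriv φ)) τ) τ :=
    hb.mul hr
  have hp2ne : (deriv φ τ) ^ 2 ≠ 0 := pow_ne_zero 2 (hφ' τ).ne'
  have hdiv := hnum.div hp2 hp2ne
  have := hb1.sub hdiv
  refine this.congr_deriv ?_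
  have hp := (hφ' τ).ne'
  field_simp
  ring

lemma adAction_deriv2_eq {φ : ℝ → ℝ} (hφ : ContDiff ℝ (⊤ : ℕ∞) φ) (hφ' : ∀ τ, 0 < deriv φ τ)
    {ζ : ℝ → ℝ} (hζ : ContDiff ℝ (⊤ : ℕ∞) ζ) :
    deriv (deriv (adAction φ ζ)) =
      fun τ => deriv (deriv ζ) (φ τ) * deriv φ τ
        - deriv ζ (φ τ) * deriv (deriv φ) τ / deriv φ τ
        - ζ (φ τ) * (deriv (deriv (deriv φ)) τ / (deriv φ τ) ^ 2
            - 2 * (deriv (deriv φ) τ) ^ 2 / (deriv φ τ) ^ 3) :=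
  funext fun τ => (adAction_hasDerivAt2 hφ hφ' hζ τ).deriv

/-- The Schwarzian derivative measures the failure of the Gel'fand–Fuks cocycle to be
invariant under diffeomorphisms of the circle:
`c₀(Ad_{φ⁻¹}ξ, Ad_{φ⁻¹}η) − c₀(ξ, η) = ∫₀^{2π} (ξ(φ)η'(φ) − ξ'(φ)η(φ))·S(φ)/φ' dτ`. -/
theorem gelfandFuks_diffeo_anomaly (φ ξ η : ℝ → ℝ)
    (hφ : ContDiff ℝ (⊤ : ℕ∞) φ) (hφ' : ∀ τ, 0 < deriv φ τ)
    (hφp : ∀ τ, φ (τ + 2 * π) = φ τ + 2 * π)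
    (hξ : ContDiff ℝ (⊤ : ℕ∞) ξ) (hξp : Function.Periodic ξ (2 * π))
    (hη : ContDiff ℝ (⊤ : ℕ∞) η) (hηp : Function.Periodic η (2 * π)) :
    (∫ τ in (0 : ℝ)..(2 * π),
        deriv (adAction φ ξ) τ * deriv (deriv (adAction φ η)) τ)
      - (∫ τ in (0 : ℝ)..(2 * π), deriv ξ τ * deriv (deriv η) τ)
      = ∫ τ in (0 : ℝ)..(2 * π),
          (ξ (φ τ) * deriv η (φ τ) - deriv ξ (φ τ) * η (φ τ))
            * (schwarzian φ τ / deriv φ τ) := by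
  -- smoothness of iterated derivatives
  have hφ1 : ContDiff ℝ ∞ (deriv φ) := (contDiff_infty_iff_deriv.mp (hφ.of_le (by simp))).2
  have hφ2 : ContDiff ℝ ∞ (deriv (deriv φ)) := (contDiff_infty_iff_deriv.mp hφ1).2
  have hφ3 : ContDiff ℝ ∞ (deriv (deriv (deriv φ))) := (contDiff_infty_iff_deriv.mp hφ2).2
  have hξ1 : ContDiff ℝ ∞ (deriv ξ) := (contDiff_infty_iff_deriv.mp (hξ.of_le (by simp))).2
  have hη1 : ContDiff ℝ ∞ (deriv η) := (contDiff_infty_iff_deriv.mp (hη.of_le (by simp))).2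
  have hη2 : ContDiff ℝ ∞ (deriv (deriv η)) := (contDiff_infty_iff_deriv.mp hη1).2
  have hpne : ∀ τ, deriv φ τ ≠ 0 := fun τ => (hφ' τ).ne'
  -- continuity atoms
  have cp : Continuous (deriv φ) := hφ1.continuous
  have cq : Continuous (deriv (deriv φ)) := hφ2.continuous
  have cr : Continuous (deriv (deriv (deriv φ))) := hφ3.continuous
  have cξφ : Continuous (fun τ => ξ (φ τ)) := hξ.continuous.comp hφ.continuous
  have cξ'φ : Continuous (fun τ => deriv ξ (φ τ)) := hξ1.continuous.comp hφ.continuous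
  have cηφ : Continuous (fun τ => η (φ τ)) := hη.continuous.comp hφ.continuous
  have cη'φ : Continuous (fun τ => deriv η (φ τ)) := hη1.continuous.comp hφ.continuous
  have cη''φ : Continuous (fun τ => deriv (deriv η) (φ τ)) := hη2.continuous.comp hφ.continuous
  have cp2ne : ∀ τ, (deriv φ τ) ^ 2 ≠ 0 := fun τ => pow_ne_zero _ (hpne τ)
  have cp3ne : ∀ τ, (deriv φ τ) ^ 3 ≠ 0 := fun τ => pow_ne_zero _ (hpne τ)
  have cp4ne : ∀ τ, (deriv φ τ) ^ 4 ≠ 0 := fun τ => pow_ne_zero _ (hpne τ)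
  -- continuity of the three integrands
  have contF1 : Continuous (fun τ =>
      deriv (adAction φ ξ) τ * deriv (deriv (adAction φ η)) τ) := by
    rw [adAction_deriv_eq hφ hφ' hξ, adAction_deriv2_eq hφ hφ' hη]
    exact (cξ'φ.sub ((cξφ.mul cq).div (cp.pow 2) cp2ne)).mul
      (((cη''φ.mul cp).sub ((cη'φ.mul cq).div cp hpne)).sub
        (cηφ.mul ((cr.div (cp.pow 2) cp2ne).sub
          ((continuous_const.mul (cq.pow 2)).div (cp.pow 3) cp3ne))))
  have contF2 : Continuous (fun τ =>
      deriv φ τ * (deriv ξ (φ τ) * deriv (deriv η) (φ τ))) :=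
    cp.mul (cξ'φ.mul cη''φ)
  have contF3 : Continuous (fun τ =>
      (ξ (φ τ) * deriv η (φ τ) - deriv ξ (φ τ) * η (φ τ))
        * (schwarzian φ τ / deriv φ τ)) := by
    simp only [schwarzian_eq]
    exact ((cξφ.mul cη'φ).sub (cξ'φ.mul cηφ)).mul
      (((cr.div cp hpne).sub
          (continuous_const.mul ((cq.div cp hpne).pow 2))).div cp hpne)
  have int1 := contF1.intervalIntegrable (μ := MeasureTheory.volume) (0 : ℝ) (2 * π)
  have int2 := contF2.intervalIntegrable (μ := MeasureTheory.volume) (0 : ℝ) (2 * π)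
  have int3 := contF3.intervalIntegrable (μ := MeasureTheory.volume) (0 : ℝ) (2 * π)
  -- the primitive G and the pointwise derivative identity
  set G : ℝ → ℝ := fun t =>
      -(ξ (φ t) * deriv η (φ t) * deriv (deriv φ) t / (deriv φ t) ^ 2)
        + 1 / 2 * (ξ (φ t) * η (φ t) * (deriv (deriv φ) t) ^ 2 / (deriv φ t) ^ 4) with hGdef
  have hG : ∀ τ, HasDerivAt G
      (deriv (adAction φ ξ) τ * deriv (deriv (adAction φ η)) τ
        - deriv φ τ * (deriv ξ (φ τ) * deriv (deriv η) (φ τ))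
        - (ξ (φ τ) * deriv η (φ τ) - deriv ξ (φ τ) * η (φ τ))
            * (schwarzian φ τ / deriv φ τ)) τ := by
    intro τ
    have h1 : HasDerivAt φ (deriv φ τ) τ := (hφ.differentiable (by simp) τ).hasDerivAt
    have hq : HasDerivAt (deriv φ) (deriv (deriv φ) τ) τ :=
      (hφ1.differentiable (by norm_num) τ).hasDerivAt
    have hr : HasDerivAt (deriv (deriv φ)) (deriv (deriv (deriv φ)) τ) τ :=
      (hφ2.differentiable (by norm_num) τ).hasDerivAt
    have ha : HasDerivAt (fun t => ξ (φ t)) (deriv ξ (φ τ) * deriv φ τ) τ :=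
      ((hξ.differentiable (by simp) _).hasDerivAt).comp τ h1
    have hb : HasDerivAt (fun t => η (φ t)) (deriv η (φ τ) * deriv φ τ) τ :=
      ((hη.differentiable (by simp) _).hasDerivAt).comp τ h1
    have hb1 : HasDerivAt (fun t => deriv η (φ t)) (deriv (deriv η) (φ τ) * deriv φ τ) τ :=
      ((hη1.differentiable (by norm_num) _).hasDerivAt).comp τ h1
    have t1 := ((ha.mul hb1).mul hr).div (hq.pow 2) (cp2ne τ)
    have t2 := ((ha.mul hb).mul (hr.pow 2)).div (hq.pow 4) (cp4ne τ)
    have total := (t1.neg).add (HasDerivAt.const_mul (1 / 2 : ℝ) t2)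
    rw [hGdef]
    refine total.congr_deriv ?_
    rw [(adAction_hasDerivAt hφ hφ' hξ τ).deriv, (adAction_hasDerivAt2 hφ hφ' hη τ).deriv,
      schwarzian_eq]
    have hp := hpne τ
    simp only [Pi.mul_apply, Pi.pow_apply]
    field_simp
    ring
  -- periodicity facts
  have hpper : Function.Periodic (deriv φ) (2 * π) := by
    intro x
    have h : (fun y => φ (y + 2 * π)) = fun y => φ y + 2 * π := funext hφp
    rw [← deriv_comp_add_const, h, deriv_add_const]
  have hqper : Function.Periodic (deriv (deriv φ)) (2 * π) := periodic_deriv_aux hpper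
  have hGper : G (2 * π) = G 0 := by
    have e0 : φ (2 * π) = φ 0 + 2 * π := by simpa using hφp 0
    have e1 : deriv φ (2 * π) = deriv φ 0 := by simpa using hpper 0
    have e2 : deriv (deriv φ) (2 * π) = deriv (deriv φ) 0 := by simpa using hqper 0
    rw [hGdef]
    simp only [e0, e1, e2, hξp (φ 0), hηp (φ 0), periodic_deriv_aux hηp (φ 0)]
  -- integral of the derivative of a periodic function vanishes
  have key : (∫ τ in (0 : ℝ)..(2 * π),
      (deriv (adAction φ ξ) τ * deriv (deriv (adAction φ η)) τ
        - deriv φ τ * (deriv ξ (φ τ) * deriv (deriv η) (φ τ))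
        - (ξ (φ τ) * deriv η (φ τ) - deriv ξ (φ τ) * η (φ τ))
            * (schwarzian φ τ / deriv φ τ))) = 0 := by
    rw [intervalIntegral.integral_eq_sub_of_hasDerivAt (fun τ _ => hG τ)
      ((int1.sub int2).sub int3), hGper, sub_self]
  rw [intervalIntegral.integral_sub (int1.sub int2) int3,
    intervalIntegral.integral_sub int1 int2] at key
  -- change of variables in the middle integral
  have hcv : (∫ τ in (0 : ℝ)..(2 * π),
      deriv φ τ * (deriv ξ (φ τ) * deriv (deriv η) (φ τ)))
      = ∫ τ in (0 : ℝ)..(2 * π), deriv ξ τ * deriv (deriv η) τ := by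
    have hcomp := intervalIntegral.integral_comp_smul_deriv
      (a := (0 : ℝ)) (b := 2 * π) (f := φ) (f' := deriv φ)
      (g := fun u => deriv ξ u * deriv (deriv η) u)
      (fun x _ => (hφ.differentiable (by simp) x).hasDerivAt)
      cp.continuousOn ((hξ1.continuous).mul (hη2.continuous))
    simp only [smul_eq_mul, Function.comp] at hcomp
    rw [hcomp]
    have e0 : φ (2 * π) = φ 0 + 2 * π := by simpa using hφp 0
    rw [e0]
    have gper : Function.Periodic (fun u => deriv ξ u * deriv (deriv η) u) (2 * π) :=
      (periodic_deriv_aux hξp).mul (periodic_deriv_aux (periodic_deriv_aux hηp))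
    simpa using gper.intervalIntegral_add_eq (φ 0) 0
  rw [hcv] at key
  linarith
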